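/- Let Γ be a compact Lie group acting orthogonally on ℝⁿ, let F ∈ 𝓤_{n,r}(Γ) be a Γ-transversal unfolding of a germ f ∈ 𝓜ₙ(Γ), and let φ ∈ Lₙ(Γ). Then the unfolding G(x,u) = F(φ(x),u) is a Γ-transversal unfolding of the germ g = f∘φ. -/

import Mathlib

open Filter Topology Pointwise RealInnerProductSpace

noncomputable section

/-- ℝⁿ, as a Euclidean space. -/
abbrev Euc (n : ℕ) : Type := EuclideanSpace ℝ (Fin n)

/-- The germs at `0` of real-valued functions on ℝⁿ. -/
abbrev Ger (n : ℕ) : Type := Filter.Germ (𝓝 (0 : Euc n)) ℝ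

/-- A function between normed spaces defines a smooth germ at `0`:
it is `C^∞` on some neighbourhood of `0`. -/
def SmoothNear {A B : Type} [NormedAddCommGroup A] [NormedSpace ℝ A]
    [NormedAddCommGroup B] [NormedSpace ℝ B] (f : A → B) : Prop :=
  ∃ U ∈ 𝓝 (0 : A), ContDiffOn ℝ (⊤ : ℕ∞) f U

variable {n r d : ℕ} {G : Type} [Group G]

/-- Γ-invariance of (the germ at `0` of) `f : ℝⁿ → ℝ`. -/
def InvNear (ρ : G →* (Euc n ≃ₗᵢ[ℝ] Euc n)) (f : Euc n → ℝ) : Prop :=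
  ∀ᶠ x in 𝓝 (0 : Euc n), ∀ γ : G, f (ρ γ x) = f x

/-- Γ-equivariance of (the germ at `0` of) `φ : ℝⁿ → ℝⁿ`. -/
def EqvNear (ρ : G →* (Euc n ≃ₗᵢ[ℝ] Euc n)) (φ : Euc n → Euc n) : Prop :=
  ∀ᶠ x in 𝓝 (0 : Euc n), ∀ γ : G, φ (ρ γ x) = ρ γ (φ x)

/-- `𝓔ₙ(Γ)`, the set of Γ-invariant smooth germs at `0`. -/
def EnG (ρ : G →* (Euc n ≃ₗᵢ[ℝ] Euc n)) : Set (Ger n) :=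
  {h | ∃ f : Euc n → ℝ, SmoothNear f ∧ InvNear ρ f ∧ h = Filter.Germ.ofFun f}

/-- `𝓜ₙᵏ(Γ)`, the Γ-invariant smooth germs whose derivatives of order `< k` vanish at `0`. -/
def MnkG (ρ : G →* (Euc n ≃ₗᵢ[ℝ] Euc n)) (k : ℕ) : Set (Ger n) :=
  {h | ∃ f : Euc n → ℝ, SmoothNear f ∧ InvNear ρ f ∧
    (∀ i < k, iteratedFDeriv ℝ i f 0 = 0) ∧ h = Filter.Germ.ofFun f}

/-- `𝓜ₙ(Γ) = 𝓜ₙ¹(Γ)`. -/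
abbrev MnG (ρ : G →* (Euc n ≃ₗᵢ[ℝ] Euc n)) : Set (Ger n) := MnkG ρ 1

/-- The tangent space `T_{O_f}` to the orbit of `f`: germs `φ·∇f` with `φ` a Γ-equivariant
germ vanishing at `0`. -/
def TOrb (ρ : G →* (Euc n ≃ₗᵢ[ℝ] Euc n)) (f : Euc n → ℝ) : Set (Ger n) :=
  {h | ∃ φ : Euc n → Euc n, SmoothNear φ ∧ EqvNear ρ φ ∧ φ 0 = 0 ∧
    h = Filter.Germ.ofFun fun x => ⟪φ x, gradient f x⟫}

/-- The extended tangent space `T^ext_{O_f}`: germs `φ·∇f` with `φ` a Γ-equivariant germ. -/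
def TOrbExt (ρ : G →* (Euc n ≃ₗᵢ[ℝ] Euc n)) (f : Euc n → ℝ) : Set (Ger n) :=
  {h | ∃ φ : Euc n → Euc n, SmoothNear φ ∧ EqvNear ρ φ ∧
    h = Filter.Germ.ofFun fun x => ⟪φ x, gradient f x⟫}

/-- The Taylor polynomial `j^k f` of order `k` of `f` at `0`, evaluated at `x`. -/
def taylorPoly (f : Euc n → ℝ) (k : ℕ) (x : Euc n) : ℝ :=
  ∑ i ∈ Finset.range (k + 1), (1 / (i.factorial : ℝ)) * iteratedFDeriv ℝ i f 0 (fun _ => x)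

/-- The codimension (in `ℕ∞`) of a subspace `T` inside `M`: the least number of germs that
together with `T` ℝ-linearly span `M`. -/
def codimOf {m : ℕ} (T M : Set (Ger m)) : ℕ∞ :=
  sInf {c : ℕ∞ | ∃ k : ℕ, c = (k : ℕ∞) ∧ ∃ v : Fin k → Ger m,
    M ⊆ {g | ∃ t ∈ T, ∃ a : Fin k → ℝ, g = t + ∑ i, a i • v i}}

/-- The Γ-codimension `cod_Γ(f) = dim_ℝ 𝓜ₙ(Γ)/T^ext_{O_f}`. -/
def codG (ρ : G →* (Euc n ≃ₗᵢ[ℝ] Euc n)) (f : Euc n → ℝ) : ℕ∞ :=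
  codimOf (TOrbExt ρ f) (MnG ρ)

/-- A germ of a diffeomorphism of `(A, 0)` fixing `0`. -/
def GermDiffeo {A : Type} [NormedAddCommGroup A] [NormedSpace ℝ A] (φ : A → A) : Prop :=
  SmoothNear φ ∧ φ 0 = 0 ∧ ∃ ψ : A → A, SmoothNear ψ ∧ ψ 0 = 0 ∧
    (∀ᶠ x in 𝓝 (0 : A), ψ (φ x) = x) ∧ (∀ᶠ x in 𝓝 (0 : A), φ (ψ x) = x)

/-- `Lₙ(Γ)`: germs of Γ-equivariant diffeomorphisms of `(ℝⁿ, 0)` fixing the origin. -/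
def LnG (ρ : G →* (Euc n ≃ₗᵢ[ℝ] Euc n)) (φ : Euc n → Euc n) : Prop :=
  GermDiffeo φ ∧ EqvNear ρ φ

/-- Γ-equivalence of germs: `g = f ∘ φ` for some `φ ∈ Lₙ(Γ)`. -/
def GermEquiv (ρ : G →* (Euc n ≃ₗᵢ[ℝ] Euc n)) (f g : Euc n → ℝ) : Prop :=
  ∃ φ : Euc n → Euc n, LnG ρ φ ∧ ∀ᶠ x in 𝓝 (0 : Euc n), g x = f (φ x)

/-- Γ-invariance, in the `x`-variable, of (the germ at `0` of) a family `F : ℝⁿ × ℝʳ → ℝ`. -/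
def InvNearU (ρ : G →* (Euc n ≃ₗᵢ[ℝ] Euc n)) (F : Euc n × Euc r → ℝ) : Prop :=
  ∀ᶠ p : Euc n × Euc r in 𝓝 0, ∀ γ : G, F (ρ γ p.1, p.2) = F p

/-- `F` is a Γ-invariant `r`-unfolding of `f`. -/
def IsUnfolding (ρ : G →* (Euc n ≃ₗᵢ[ℝ] Euc n)) (f : Euc n → ℝ)
    (F : Euc n × Euc r → ℝ) : Prop :=
  SmoothNear F ∧ (∀ᶠ x in 𝓝 (0 : Euc n), F (x, 0) = f x) ∧ InvNearU ρ F

/-- `αᵢ(F) = ∂F/∂uᵢ(·, 0)`. -/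
def alphaU (F : Euc n × Euc r → ℝ) (i : Fin r) (x : Euc n) : ℝ :=
  gradient (fun u => F (x, u)) 0 i

/-- `span_ℝ {1, α₁(F), …, α_r(F)}`, as a set of germs at `0`. -/
def SpanAlpha (F : Euc n × Euc r → ℝ) : Set (Ger n) :=
  {h | ∃ (c : ℝ) (b : Fin r → ℝ),
    h = Filter.Germ.ofFun fun x => c + ∑ i, b i * alphaU F i x}

/-- `F` is a Γ-transversal unfolding of `f`:
`𝓔ₙ(Γ) = T^ext_{O_f} + span_ℝ {1, α₁(F), …, α_r(F)}`. -/
def Transversal (ρ : G →* (Euc n ≃ₗᵢ[ℝ] Euc n)) (f : Euc n → ℝ)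
    (F : Euc n × Euc r → ℝ) : Prop :=
  EnG ρ = TOrbExt ρ f + SpanAlpha F

/-- The unfolding `Gu` (with `d` parameters) is induced from `F` (with `r` parameters). -/
def InducedFrom (ρ : G →* (Euc n ≃ₗᵢ[ℝ] Euc n)) (F : Euc n × Euc r → ℝ)
    (Gu : Euc n × Euc d → ℝ) : Prop :=
  ∃ (φ : Euc n × Euc d → Euc n) (ψ : Euc d → Euc r) (h : Euc d → ℝ),
    SmoothNear φ ∧ SmoothNear ψ ∧ SmoothNear h ∧
    φ 0 = 0 ∧ ψ 0 = 0 ∧ h 0 = 0 ∧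
    (∀ᶠ p : Euc n × Euc d in 𝓝 0, ∀ γ : G, φ (ρ γ p.1, p.2) = ρ γ (φ p)) ∧
    (∀ᶠ p : Euc n × Euc d in 𝓝 0, Gu p = F (φ p, ψ p.2) + h p.2)

/-- Γ-equivalence of two `r`-unfoldings: induced with a germ diffeomorphism in the parameters. -/
def EquivUnf (ρ : G →* (Euc n ≃ₗᵢ[ℝ] Euc n)) (F Gu : Euc n × Euc r → ℝ) : Prop :=
  ∃ (φ : Euc n × Euc r → Euc n) (ψ : Euc r → Euc r) (h : Euc r → ℝ),
    SmoothNear φ ∧ GermDiffeo ψ ∧ SmoothNear h ∧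
    φ 0 = 0 ∧ h 0 = 0 ∧
    (∀ᶠ p : Euc n × Euc r in 𝓝 0, ∀ γ : G, φ (ρ γ p.1, p.2) = ρ γ (φ p)) ∧
    (∀ᶠ p : Euc n × Euc r in 𝓝 0, Gu p = F (φ p, ψ p.2) + h p.2)

/-- `F` is a versal unfolding of `f`: every Γ-invariant unfolding of `f` is induced from `F`. -/
def Versal (ρ : G →* (Euc n ≃ₗᵢ[ℝ] Euc n)) (f : Euc n → ℝ)
    (F : Euc n × Euc r → ℝ) : Prop :=
  ∀ (d : ℕ) (Gu : Euc n × Euc d → ℝ), IsUnfolding ρ f Gu → InducedFrom ρ F Gu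

/-! Pulling germs back along `φ` and along its inverse `ψ` are mutually inverse bijections of
`𝓔ₙ(Γ)`. Pulling back along an equivariant diffeomorphism `θ` with inverse `θ'` sends
`T^ext_{O_f}` into `T^ext_{O_{f∘θ}}`, since by the chain rule `⟪χ ∘ θ, ∇f ∘ θ⟫ = ⟪χ', ∇(f ∘ θ)⟫`
for the equivariant field `χ' = Dθ'(θ ·) (χ ∘ θ)`, and it sends `αᵢ(F)` to `αᵢ(F ∘ (θ × id))` on the
nose. Applied to `φ` this gives `𝓔ₙ(Γ) ⊆ T^ext_{O_{f∘φ}} + span{1, αᵢ}`, applied to `ψ` the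
reverse inclusion. -/

section Smooth

variable {A B C : Type} [NormedAddCommGroup A] [NormedSpace ℝ A]
  [NormedAddCommGroup B] [NormedSpace ℝ B] [NormedAddCommGroup C] [NormedSpace ℝ C]

theorem smoothNear_iff_eventually_contDiffAt {f : A → B} :
    SmoothNear f ↔ ∀ᶠ x in 𝓝 0, ContDiffAt ℝ (⊤ : ℕ∞) f x := by
  constructor
  · rintro ⟨U, hU, hf⟩
    filter_upwards [eventually_mem_nhds_iff.2 hU] with x hx using hf.contDiffAt hx
  · exact fun h => ⟨_, h, fun x (hx : ContDiffAt ℝ _ f x) => hx.contDiffWithinAt⟩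

theorem SmoothNear.continuousAt {f : A → B} (hf : SmoothNear f) : ContinuousAt f 0 :=
  (smoothNear_iff_eventually_contDiffAt.1 hf).self_of_nhds.continuousAt

theorem SmoothNear.tendsto {f : A → B} (hf : SmoothNear f) (h0 : f 0 = 0) :
    Tendsto f (𝓝 0) (𝓝 0) :=
  h0 ▸ hf.continuousAt

theorem SmoothNear.comp {g : B → C} {f : A → B} (hg : SmoothNear g) (hf : SmoothNear f)
    (h0 : f 0 = 0) : SmoothNear (fun x => g (f x)) := by
  have hft := hf.tendsto h0
  rw [smoothNear_iff_eventually_contDiffAt] at hg hf ⊢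
  filter_upwards [hf, hft.eventually hg] with x hfx hgx using hgx.comp x hfx

theorem SmoothNear.eventually_differentiableAt {f : A → B} (hf : SmoothNear f) :
    ∀ᶠ x in 𝓝 0, DifferentiableAt ℝ f x :=
  (smoothNear_iff_eventually_contDiffAt.1 hf).mono fun _ hx => hx.differentiableAt (by simp)

theorem eventually_fderiv_apply_fderiv_of_rightInverse {θ : B → A} {θ' : A → B}
    (hθ : SmoothNear θ) (hθ' : SmoothNear θ') (hθ'0 : θ' 0 = 0)
    (hid : ∀ᶠ x in 𝓝 0, θ (θ' x) = x) :
    ∀ᶠ x in 𝓝 0, ∀ v, fderiv ℝ θ (θ' x) (fderiv ℝ θ' x v) = v := by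
  filter_upwards [eventually_eventually_nhds.2 hid, hθ'.eventually_differentiableAt,
    (hθ'.tendsto hθ'0).eventually hθ.eventually_differentiableAt] with x hidx hθ'x hθx v
  have hcomp : fderiv ℝ (θ ∘ θ') x = ContinuousLinearMap.id ℝ A := by
    rw [Filter.EventuallyEq.fderiv_eq (show θ ∘ θ' =ᶠ[𝓝 x] id from hidx), fderiv_id]
  rw [fderiv_comp x hθx hθ'x] at hcomp
  exact DFunLike.congr_fun hcomp v

end Smooth

section Equivariance

variable (ρ : G →* (Euc n ≃ₗᵢ[ℝ] Euc n))

theorem eventually_forall_rho {p : Euc n → Prop} (h : ∀ᶠ x in 𝓝 0, p x) :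
    ∀ᶠ x in 𝓝 0, ∀ γ, p (ρ γ x) := by
  obtain ⟨ε, hε, hball⟩ := Metric.eventually_nhds_iff_ball.1 h
  refine Metric.eventually_nhds_iff_ball.2 ⟨ε, hε, fun x hx γ => hball _ ?_⟩
  simpa using hx

variable {ρ}

theorem InvNear.comp {e : Euc n → ℝ} {θ : Euc n → Euc n} (he : InvNear ρ e)
    (hθ : Tendsto θ (𝓝 0) (𝓝 0)) (hθe : EqvNear ρ θ) : InvNear ρ (fun x => e (θ x)) := by
  filter_upwards [hθ.eventually he, hθe] with x hex hθx γ
  rw [hθx γ, hex γ]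

theorem EqvNear.of_inverse {φ ψ : Euc n → Euc n} (hφ : EqvNear ρ φ)
    (hψ : Tendsto ψ (𝓝 0) (𝓝 0)) (hψφ : ∀ᶠ x in 𝓝 0, ψ (φ x) = x)
    (hφψ : ∀ᶠ x in 𝓝 0, φ (ψ x) = x) : EqvNear ρ ψ := by
  filter_upwards [hψ.eventually (eventually_forall_rho ρ hψφ), hψ.eventually hφ, hφψ]
    with x hψφx hφx hφψx γ
  rw [← hψφx γ, hφx γ, hφψx]

theorem LnG.tendsto {φ : Euc n → Euc n} (hφ : LnG ρ φ) : Tendsto φ (𝓝 0) (𝓝 0) :=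
  hφ.1.1.tendsto hφ.1.2.1

theorem LnG.exists_inverse {φ : Euc n → Euc n} (hφ : LnG ρ φ) :
    ∃ ψ, LnG ρ ψ ∧ (∀ᶠ x in 𝓝 0, ψ (φ x) = x) ∧ (∀ᶠ x in 𝓝 0, φ (ψ x) = x) := by
  obtain ⟨⟨hφs, hφ0, ψ, hψs, hψ0, hψφ, hφψ⟩, hφe⟩ := hφ
  exact ⟨ψ, ⟨⟨hψs, hψ0, φ, hφs, hφ0, hφψ, hψφ⟩, hφe.of_inverse (hψs.tendsto hψ0) hψφ hφψ⟩,
    hψφ, hφψ⟩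

end Equivariance

section Unfolding

variable {ρ : G →* (Euc n ≃ₗᵢ[ℝ] Euc n)}

theorem IsUnfolding.comp_left {f : Euc n → ℝ} {F : Euc n × Euc r → ℝ}
    (hF : IsUnfolding ρ f F) {φ : Euc n → Euc n} (hφs : SmoothNear φ) (hφ0 : φ 0 = 0)
    (hφe : EqvNear ρ φ) :
    IsUnfolding ρ (fun x => f (φ x)) (fun p : Euc n × Euc r => F (φ p.1, p.2)) := by
  obtain ⟨hFs, hFf, hFinv⟩ := hF
  have hfst : Tendsto Prod.fst (𝓝 (0 : Euc n × Euc r)) (𝓝 0) := continuous_fst.tendsto 0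
  have hΦs : SmoothNear (Prod.map φ (id : Euc r → Euc r)) := by
    rw [smoothNear_iff_eventually_contDiffAt] at hφs ⊢
    filter_upwards [hfst.eventually hφs] with p hp using hp.prodMap contDiffAt_id
  have hΦ0 : Prod.map φ (id : Euc r → Euc r) 0 = 0 := Prod.ext hφ0 rfl
  refine ⟨hFs.comp hΦs hΦ0, (hφs.tendsto hφ0).eventually hFf, ?_⟩
  filter_upwards [(hΦs.tendsto hΦ0).eventually hFinv, hfst.eventually hφe] with p hFp hφp γ
  rw [hφp γ]
  exact hFp γ

end Unfolding

section Pullback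

variable {ρ : G →* (Euc n ≃ₗᵢ[ℝ] Euc n)}

theorem EqvNear.eventually_fderiv_rho {θ : Euc n → Euc n} (hθ : EqvNear ρ θ) :
    ∀ᶠ x in 𝓝 0, ∀ γ v, fderiv ℝ θ (ρ γ x) (ρ γ v) = ρ γ (fderiv ℝ θ x v) := by
  filter_upwards [eventually_eventually_nhds.2 hθ] with x hx γ v
  have h : θ ∘ ρ γ =ᶠ[𝓝 x] ρ γ ∘ θ := hx.mono fun y hy => hy γ
  have h' := h.fderiv_eq (𝕜 := ℝ)
  have hright := (ρ γ).toContinuousLinearEquiv.comp_right_fderiv (𝕜 := ℝ) (f := θ) (x := x)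
  simp only [LinearIsometryEquiv.coe_toContinuousLinearEquiv] at hright
  rw [hright, LinearIsometryEquiv.comp_fderiv] at h'
  exact DFunLike.congr_fun h' v

theorem Filter.Germ.add_compTendsto {α β γ : Type} [Add β] {l : Filter α} {lc : Filter γ}
    (a b : Germ l β) {g : γ → α} (hg : Tendsto g lc l) :
    (a + b).compTendsto g hg = a.compTendsto g hg + b.compTendsto g hg :=
  Germ.inductionOn₂ a b fun _ _ => rfl

theorem Filter.Germ.compTendsto_compTendsto_eq_self {α β : Type} {l : Filter α} (a : Germ l β)
    {φ ψ : α → α} (hψ : Tendsto ψ l l) (hφ : Tendsto φ l l) (hψφ : ∀ᶠ x in l, ψ (φ x) = x) :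
    (a.compTendsto ψ hψ).compTendsto φ hφ = a :=
  Germ.inductionOn a fun e => Germ.coe_eq.2 (hψφ.mono fun _ hx => congrArg e hx)

theorem compTendsto_mem_EnG {θ : Euc n → Euc n} (hθ : LnG ρ θ) {a : Ger n} (ha : a ∈ EnG ρ) :
    a.compTendsto θ hθ.tendsto ∈ EnG ρ := by
  obtain ⟨e, hes, hei, rfl⟩ := ha
  exact ⟨_, hes.comp hθ.1.1 hθ.1.2.1, hei.comp hθ.tendsto hθ.2, rfl⟩

theorem compTendsto_mem_TOrbExt {f : Euc n → ℝ} (hf : SmoothNear f) {θ : Euc n → Euc n}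
    (hθ : LnG ρ θ) {a : Ger n} (ha : a ∈ TOrbExt ρ f) :
    a.compTendsto θ hθ.tendsto ∈ TOrbExt ρ (fun x => f (θ x)) := by
  obtain ⟨θ', hθ', hθ'θ, hθθ'⟩ := hθ.exists_inverse
  obtain ⟨χ, hχs, hχe, rfl⟩ := ha
  have hθt := hθ.tendsto
  refine ⟨fun y => fderiv ℝ θ' (θ y) (χ (θ y)), ?_, ?_, ?_⟩
  · have hθs := smoothNear_iff_eventually_contDiffAt.1 hθ.1.1
    have hθ's := smoothNear_iff_eventually_contDiffAt.1 hθ'.1.1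
    have hχs' := smoothNear_iff_eventually_contDiffAt.1 hχs
    rw [smoothNear_iff_eventually_contDiffAt]
    filter_upwards [hθs, hθt.eventually hθ's, hθt.eventually hχs'] with y hθy hθ'y hχy
    exact ((hθ'y.fderiv_right (by simp)).comp y hθy).clm_apply (hχy.comp y hθy)
  · filter_upwards [hθ.2, hθt.eventually hχe, hθt.eventually hθ'.2.eventually_fderiv_rho]
      with y hθy hχy hθ'y γ
    simp only [hθy γ, hχy γ, hθ'y γ]
  · rw [Germ.coe_compTendsto]
    refine Germ.coe_eq.2 ?_
    filter_upwards [hθt.eventually hf.eventually_differentiableAt,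
      hθ.1.1.eventually_differentiableAt, hθ'θ,
      hθt.eventually (eventually_fderiv_apply_fderiv_of_rightInverse hθ.1.1 hθ'.1.1
        hθ'.1.2.1 hθθ')] with y hfy hθy hθ'θy hinv
    rw [hθ'θy] at hinv
    simp only [Function.comp_apply, inner_gradient_right, fderiv_fun_comp y hfy hθy,
      ContinuousLinearMap.comp_apply, hinv]

theorem compTendsto_mem_SpanAlpha {F : Euc n × Euc r → ℝ} {θ : Euc n → Euc n}
    (hθ : Tendsto θ (𝓝 0) (𝓝 0)) {a : Ger n} (ha : a ∈ SpanAlpha F) :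
    a.compTendsto θ hθ ∈ SpanAlpha (fun p : Euc n × Euc r => F (θ p.1, p.2)) := by
  obtain ⟨c, b, rfl⟩ := ha
  exact ⟨c, b, rfl⟩

theorem compTendsto_mem_TOrbExt_add_SpanAlpha {f : Euc n → ℝ} (hf : SmoothNear f)
    {F : Euc n × Euc r → ℝ} {θ : Euc n → Euc n} (hθ : LnG ρ θ) {a : Ger n}
    (ha : a ∈ TOrbExt ρ f + SpanAlpha F) :
    a.compTendsto θ hθ.tendsto ∈
      TOrbExt ρ (fun x => f (θ x)) + SpanAlpha (fun p : Euc n × Euc r => F (θ p.1, p.2)) := by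
  obtain ⟨t, ht, s, hs, rfl⟩ := ha
  exact ⟨_, compTendsto_mem_TOrbExt hf hθ ht, _, compTendsto_mem_SpanAlpha hθ.tendsto hs,
    (Germ.add_compTendsto t s _).symm⟩

theorem TOrbExt_congr {f g : Euc n → ℝ} (h : f =ᶠ[𝓝 0] g) : TOrbExt ρ f = TOrbExt ρ g := by
  suffices ∀ {f g : Euc n → ℝ}, f =ᶠ[𝓝 0] g → TOrbExt ρ f ⊆ TOrbExt ρ g from
    (this h).antisymm (this h.symm)
  rintro f g h _ ⟨χ, hχs, hχe, rfl⟩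
  refine ⟨χ, hχs, hχe, Germ.coe_eq.2 ?_⟩
  filter_upwards [h.gradient] with x hx
  rw [hx]

theorem SpanAlpha_congr {F F' : Euc n × Euc r → ℝ}
    (h : ∀ᶠ x in 𝓝 0, ∀ u, F (x, u) = F' (x, u)) : SpanAlpha F = SpanAlpha F' := by
  suffices ∀ {F F' : Euc n × Euc r → ℝ}, (∀ᶠ x in 𝓝 0, ∀ u, F (x, u) = F' (x, u)) →
      SpanAlpha F ⊆ SpanAlpha F' from
    (this h).antisymm (this (h.mono fun x hx u => (hx u).symm))
  rintro F F' h _ ⟨c, b, rfl⟩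
  refine ⟨c, b, Germ.coe_eq.2 ?_⟩
  filter_upwards [h] with x hx
  simp only [alphaU, hx]

end Pullback

theorem statement16_general {n r : ℕ} {G : Type} [Group G]
    (ρ : G →* (Euc n ≃ₗᵢ[ℝ] Euc n))
    (f : Euc n → ℝ) (hf : SmoothNear f)
    (F : Euc n × Euc r → ℝ) (hF : IsUnfolding ρ f F) (hFt : Transversal ρ f F)
    (φ : Euc n → Euc n) (hφ : LnG ρ φ) :
    IsUnfolding ρ (fun x => f (φ x)) (fun p : Euc n × Euc r => F (φ p.1, p.2)) ∧
      Transversal ρ (fun x => f (φ x)) (fun p : Euc n × Euc r => F (φ p.1, p.2)) := by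
  refine ⟨hF.comp_left hφ.1.1 hφ.1.2.1 hφ.2, ?_⟩
  obtain ⟨ψ, hψ, hψφ, hφψ⟩ := hφ.exists_inverse
  have hT : TOrbExt ρ (fun x => f (φ (ψ x))) = TOrbExt ρ f :=
    TOrbExt_congr (hφψ.mono fun x hx => by simp only [hx])
  have hS : SpanAlpha (fun p : Euc n × Euc r => F (φ (ψ p.1), p.2)) = SpanAlpha F :=
    SpanAlpha_congr (hφψ.mono fun x hx u => by simp only [hx])
  unfold Transversal at hFt ⊢
  refine Set.Subset.antisymm (fun a ha => ?_) (fun a ha => ?_) <;>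
    rw [← a.compTendsto_compTendsto_eq_self hψ.tendsto hφ.tendsto hψφ]
  · apply compTendsto_mem_TOrbExt_add_SpanAlpha hf hφ
    rw [← hFt]
    exact compTendsto_mem_EnG hψ ha
  · apply compTendsto_mem_EnG hφ
    have hmem := compTendsto_mem_TOrbExt_add_SpanAlpha (hf.comp hφ.1.1 hφ.1.2.1) hψ ha
    beta_reduce at hmem
    rwa [hT, hS, ← hFt] at hmem

/-- composing a Γ-transversal unfolding with `φ ∈ Lₙ(Γ)` in the variables
yields a Γ-transversal unfolding of `f ∘ φ`. -/
theorem statement16 {n r : ℕ} {G : Type} [Group G] [TopologicalSpace G]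
    [IsTopologicalGroup G] [CompactSpace G]
    (ρ : G →* (Euc n ≃ₗᵢ[ℝ] Euc n))
    (f : Euc n → ℝ) (hf : SmoothNear f) (hfinv : InvNear ρ f) (hf0 : f 0 = 0)
    (F : Euc n × Euc r → ℝ) (hF : IsUnfolding ρ f F) (hFt : Transversal ρ f F)
    (φ : Euc n → Euc n) (hφ : LnG ρ φ) :
    IsUnfolding ρ (fun x => f (φ x)) (fun p : Euc n × Euc r => F (φ p.1, p.2)) ∧
      Transversal ρ (fun x => f (φ x)) (fun p : Euc n × Euc r => F (φ p.1, p.2)) :=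
  statement16_general ρ f hf F hF hFt φ hφ
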